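/- arXiv:2307.12212 — 2 statements merged into one kernel-verified Lean document; each statement's English description precedes it below -/
import Mathlib

section
/- Let P be a finite set of pairwise distinct keys in {0,1}^256 with |P| ≥ 20, and for any key x let GetClosestPeers(x) denote the set of the 20 elements of P with smallest XOR distance to x (this set is uniquely determined, since the XOR distances from distinct peer IDs to a fixed key are pairwise distinct). Define FindByCPL(key, minCPL) recursively as follows: let S := GetClosestPeers(key) and let CPL := min_{p ∈ S} cpl(p, key); while CPL ≥ minCPL, let qkey be the key obtained from key by flipping bit number CPL (bits indexed from 0 at the most significant end), update S := S ∪ FindByCPL(qkey, CPL+1), and then decrement CPL by 1; finally, remove from S all elements whose common prefix length with key is less than minCPL, and return S. Then for every key and every minCPL, FindByCPL(key, minCPL) terminates and returns exactly the set of all elements of P whose common prefix length with key is at least minCPL. -/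
/-- The common prefix length of two keys in `{0,1}^n`: the number of leading bits
(indexed from the most significant bit) on which they agree. -/
def cpl {n : ℕ} (x y : BitVec n) : ℕ :=
  ((List.range n).takeWhile (fun i => x.getMsbD i == y.getMsbD i)).length

/-- The XOR distance between two keys: their bitwise XOR interpreted as a natural number. -/
def xorDist {n : ℕ} (x y : BitVec n) : ℕ := (x ^^^ y).toNat

/-- Flip bit number `i` of `x`, where bits are indexed from 0 at the most significant end. -/
def flipMsb (x : BitVec 256) (i : ℕ) : BitVec 256 :=
  x ^^^ BitVec.twoPow 256 (255 - i)

/-- `min_{p ∈ S} cpl(p, key)` (256, the maximal possible value, for `S = ∅`). -/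
def minCpl (S : Finset (BitVec 256)) (key : BitVec 256) : ℕ :=
  S.fold min 256 (fun p => cpl p key)

lemma minCpl_le (S : Finset (BitVec 256)) (key : BitVec 256) : minCpl S key ≤ 256 :=
  Finset.fold_min_le 256 |>.mpr (Or.inl le_rfl)

/-- `FindByCPL(key, minCPL)` (Algorithm 2): let `S := GetClosestPeers(key)` and
`CPL := min_{p ∈ S} cpl(p, key)`; while `CPL ≥ minCPL`, flip bit number `CPL` of `key` to
obtain `qkey`, add `FindByCPL(qkey, CPL+1)` to `S`, and decrement `CPL`; finally keep only
the elements of `S` whose common prefix length with `key` is at least `minCPL`.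
(The union over the loop iterations `CPL = minCPL, ..., min_{p ∈ S₀} cpl(p, key)` is
expressed as a fold over that range of values.) -/
def findByCPL (GCP : BitVec 256 → Finset (BitVec 256)) (key : BitVec 256) (minCPL : ℕ) :
    Finset (BitVec 256) :=
  ((((List.range' minCPL (minCpl (GCP key) key + 1 - minCPL)).attach.map
      (fun c => findByCPL GCP (flipMsb key c.1) (c.1 + 1))).foldl (· ∪ ·)
    (GCP key)).filter (fun p => minCPL ≤ cpl p key))
termination_by 257 - minCPL
decreasing_by
  have hc := List.mem_range'_1.mp c.2
  have h256 := minCpl_le (GCP key) key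
  omega

/-! Sharing a longer prefix with `key` means being closer to `key` in XOR distance, so
every peer `q` missed by `GetClosestPeers(key)` has `cpl(q, key) ≤ CPL`, and `q ≠ key`.
Such a `q` with `j := cpl(q, key) ≥ minCPL` is exactly a peer agreeing with `key` flipped at
bit `j` on its first `j + 1` bits, so it is returned by the recursive call for `j`, which is
correct by well-founded induction on `257 - minCPL`. -/

theorem List.le_length_takeWhile_iff {α : Type*} {p : α → Bool} {l : List α} {k : ℕ} :
    k ≤ (l.takeWhile p).length ↔ k ≤ l.length ∧ ∀ a ∈ l.take k, p a := by
  induction l generalizing k with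
  | nil => simp
  | cons a l ih =>
    cases k with
    | zero => simp
    | succ k => by_cases ha : p a <;> simp [ha, ih]

theorem List.mem_foldl_union {α : Type*} [DecidableEq α] {L : List (Finset α)}
    {s : Finset α} {x : α} : x ∈ L.foldl (· ∪ ·) s ↔ x ∈ s ∨ ∃ t ∈ L, x ∈ t := by
  induction L generalizing s with
  | nil => simp
  | cons t L ih => simp [ih, or_assoc]

theorem BitVec.toNat_lt_two_pow_of_getMsbD_eq_false {n m : ℕ} {z : BitVec n}
    (h : ∀ i < m, z.getMsbD i = false) : z.toNat < 2 ^ (n - m) := by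
  refine Nat.lt_pow_two_of_testBit _ fun j hj => ?_
  rw [BitVec.testBit_toNat, BitVec.getLsbD_eq_getMsbD]
  by_cases hjn : j < n
  · simp [hjn, h _ (by omega : n - 1 - j < m)]
  · simp [hjn]

theorem BitVec.two_pow_le_toNat_of_getMsbD {n i : ℕ} {z : BitVec n} (h : z.getMsbD i = true) :
    2 ^ (n - 1 - i) ≤ z.toNat := by
  rw [BitVec.getMsbD_eq_getLsbD, Bool.and_eq_true] at h
  exact Nat.ge_two_pow_of_testBit h.2

section CommonPrefix

variable {n : ℕ} {x y k : BitVec n}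

theorem le_cpl_iff {j : ℕ} : j ≤ cpl x y ↔ j ≤ n ∧ ∀ i < j, x.getMsbD i = y.getMsbD i := by
  simp only [cpl, List.le_length_takeWhile_iff, List.length_range, List.take_range,
    List.mem_range, lt_min_iff, beq_iff_eq]
  exact and_congr_right fun hj => ⟨fun h i hi => h i ⟨hi, hi.trans_le hj⟩, fun h i hi => h i hi.1⟩

theorem cpl_le (x y : BitVec n) : cpl x y ≤ n :=
  (le_cpl_iff.mp le_rfl).1

theorem getMsbD_eq_of_lt_cpl {i : ℕ} (h : i < cpl x y) : x.getMsbD i = y.getMsbD i :=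
  (le_cpl_iff.mp le_rfl).2 i h

theorem getMsbD_cpl_ne (h : cpl x y < n) : x.getMsbD (cpl x y) ≠ y.getMsbD (cpl x y) := by
  intro heq
  have : cpl x y + 1 ≤ cpl x y := le_cpl_iff.mpr ⟨h, fun i hi => by
    rcases Nat.lt_succ_iff_lt_or_eq.mp hi with hi | rfl
    exacts [getMsbD_eq_of_lt_cpl hi, heq]⟩
  omega

theorem cpl_lt_of_ne (h : x ≠ y) : cpl x y < n :=
  (cpl_le x y).lt_of_ne fun heq => h <| BitVec.eq_of_getMsbD_eq fun _ hi =>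
    getMsbD_eq_of_lt_cpl (heq.symm ▸ hi)

theorem xorDist_lt_of_cpl_lt (h : cpl y k < cpl x k) : xorDist x k < xorDist y k := by
  have hy : cpl y k < n := h.trans_le (cpl_le x k)
  calc xorDist x k < 2 ^ (n - (cpl y k + 1)) :=
        BitVec.toNat_lt_two_pow_of_getMsbD_eq_false fun i hi => by
          simp [getMsbD_eq_of_lt_cpl (hi.trans_le h)]
    _ = 2 ^ (n - 1 - cpl y k) := by rw [Nat.sub_sub, Nat.add_comm]
    _ ≤ xorDist y k := BitVec.two_pow_le_toNat_of_getMsbD (by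
          simpa [BitVec.getMsbD_xor] using getMsbD_cpl_ne hy)

theorem xorDist_self (x : BitVec n) : xorDist x x = 0 := by
  simp [xorDist]

theorem cpl_le_of_xorDist_lt (h : xorDist x k < xorDist y k) : cpl y k ≤ cpl x k :=
  not_lt.mp fun hlt => (xorDist_lt_of_cpl_lt hlt).not_gt h

theorem cpl_lt_of_xorDist_lt (h : xorDist x k < xorDist y k) : cpl y k < n :=
  cpl_lt_of_ne fun hyk => by simp [hyk, xorDist_self] at h

end CommonPrefix

theorem getMsbD_flipMsb {x : BitVec 256} {j : ℕ} (hj : j < 256) (i : ℕ) :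
    (flipMsb x j).getMsbD i = (x.getMsbD i ^^ decide (i = j)) := by
  have hj' : 256 - (255 - j) - 1 = j := by omega
  simp [flipMsb, hj', show 255 - j < 256 by omega]

theorem lt_cpl_flipMsb_cpl {p key : BitVec 256} (h : cpl p key < 256) :
    cpl p key < cpl p (flipMsb key (cpl p key)) :=
  le_cpl_iff.mpr ⟨h, fun i hi => by
    rw [getMsbD_flipMsb h]
    rcases Nat.lt_succ_iff_lt_or_eq.mp hi with hi | rfl
    · simp [hi.ne, getMsbD_eq_of_lt_cpl hi]
    · simpa [Bool.eq_not_iff] using getMsbD_cpl_ne h⟩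

theorem cpl_le_minCpl {S : Finset (BitVec 256)} {key q : BitVec 256}
    (h : ∀ p ∈ S, xorDist p key < xorDist q key) : cpl q key ≤ minCpl S key :=
  (Finset.le_fold_min _).mpr ⟨cpl_le q key, fun p hp => cpl_le_of_xorDist_lt (h p hp)⟩

theorem mem_findByCPL {GCP : BitVec 256 → Finset (BitVec 256)} {key q : BitVec 256} {c : ℕ} :
    q ∈ findByCPL GCP key c ↔ (q ∈ GCP key ∨ ∃ j, c ≤ j ∧ j ≤ minCpl (GCP key) key ∧
      q ∈ findByCPL GCP (flipMsb key j) (j + 1)) ∧ c ≤ cpl q key := by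
  rw [findByCPL]
  simp only [Finset.mem_filter, List.mem_foldl_union, List.mem_map, List.mem_attach, true_and,
    Subtype.exists, List.mem_range'_1]
  refine and_congr_left' (or_congr_right ⟨?_, ?_⟩)
  · rintro ⟨_, ⟨j, ⟨hcj, hj⟩, rfl⟩, hq⟩
    exact ⟨j, hcj, by omega, hq⟩
  · rintro ⟨j, hcj, hj, hq⟩
    exact ⟨_, ⟨j, ⟨hcj, by omega⟩, rfl⟩, hq⟩

theorem findByCPL_eq_filter (P : Finset (BitVec 256)) (GCP : BitVec 256 → Finset (BitVec 256))
    (hsub : ∀ x, GCP x ⊆ P) (hne : ∀ x, (GCP x).Nonempty)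
    (hclosest : ∀ x, ∀ p ∈ GCP x, ∀ q ∈ P, q ∉ GCP x → xorDist p x < xorDist q x)
    (key : BitVec 256) (c : ℕ) :
    findByCPL GCP key c = P.filter (fun p => c ≤ cpl p key) := by
  -- the bounds on `j` are what `decreasing_by` needs
  have hrec : ∀ j, c ≤ j → j ≤ minCpl (GCP key) key →
      findByCPL GCP (flipMsb key j) (j + 1) = P.filter (fun p => j + 1 ≤ cpl p (flipMsb key j)) :=
    fun j _ _ => findByCPL_eq_filter P GCP hsub hne hclosest _ _
  ext q
  rw [mem_findByCPL, Finset.mem_filter]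
  refine and_congr_left fun hcq => ⟨?_, fun hqP => ?_⟩
  · rintro (hG | ⟨j, hcj, hj, hq⟩)
    · exact hsub key hG
    · exact (Finset.mem_filter.mp (hrec j hcj hj ▸ hq)).1
  · by_cases hqG : q ∈ GCP key
    · exact Or.inl hqG
    have hfar : ∀ p ∈ GCP key, xorDist p key < xorDist q key :=
      fun p hp => hclosest key p hp q hqP hqG
    obtain ⟨p, hp⟩ := hne key
    have hq_le : cpl q key ≤ minCpl (GCP key) key := cpl_le_minCpl hfar
    refine Or.inr ⟨cpl q key, hcq, hq_le, ?_⟩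
    rw [hrec _ hcq hq_le, Finset.mem_filter]
    exact ⟨hqP, lt_cpl_flipMsb_cpl (cpl_lt_of_xorDist_lt (hfar p hp))⟩
termination_by 257 - c
decreasing_by have := minCpl_le (GCP key) key; omega

theorem findByCPL_correct_general (P : Finset (BitVec 256))
    (GCP : BitVec 256 → Finset (BitVec 256))
    (hsub : ∀ x, GCP x ⊆ P)
    (hcard : ∀ x, (GCP x).card = 20)
    (hclosest : ∀ x, ∀ p ∈ GCP x, ∀ q ∈ P, q ∉ GCP x → xorDist p x < xorDist q x)
    (key : BitVec 256) (minCPL : ℕ) :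
    findByCPL GCP key minCPL = P.filter (fun p => minCPL ≤ cpl p key) :=
  findByCPL_eq_filter P GCP hsub (fun x => Finset.card_pos.mp (by rw [hcard x]; norm_num))
    hclosest key minCPL

/-- Theorem 1: if `P` is a finite set of keys with `|P| ≥ 20` and `GetClosestPeers(x)`
returns, for every key `x`, the set of the 20 elements of `P` closest to `x` in XOR
distance, then `FindByCPL(key, minCPL)` (which terminates, being a total function defined
by well-founded recursion) returns exactly the set of all elements of `P` whose common
prefix length with `key` is at least `minCPL`. -/
theorem findByCPL_correct (P : Finset (BitVec 256)) (hP : 20 ≤ P.card)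
    (GCP : BitVec 256 → Finset (BitVec 256))
    (hsub : ∀ x, GCP x ⊆ P)
    (hcard : ∀ x, (GCP x).card = 20)
    (hclosest : ∀ x, ∀ p ∈ GCP x, ∀ q ∈ P, q ∉ GCP x → xorDist p x < xorDist q x)
    (key : BitVec 256) (minCPL : ℕ) :
    findByCPL GCP key minCPL = P.filter (fun p => minCPL ≤ cpl p key) :=
  findByCPL_correct_general P GCP hsub hcard hclosest key minCPL
end

section
/- Let k ≥ 1, let a > 0 be a real constant, and let D_1, ..., D_k be real numbers with Σ_{i=1}^k i·D_i > 0. Then the function g(N) = Σ_{i=1}^k (D_i − a·i/(N+1))² on the domain N ∈ (−1, ∞) attains its global minimum at the unique point N̂ = a · (Σ_{i=1}^k i²) / (Σ_{i=1}^k i·D_i) − 1. -/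
/-- Closed-form network size estimate (Equation 2): for `k ≥ 1`, a constant `a > 0`, and
real numbers `D_1, ..., D_k` with `Σ_{i=1}^k i·D_i > 0`, the function
`g(N) = Σ_{i=1}^k (D_i − a·i/(N+1))²` on the domain `N ∈ (−1, ∞)` attains its global
minimum at the unique point `N̂ = a·(Σ_{i=1}^k i²)/(Σ_{i=1}^k i·D_i) − 1`. -/
theorem netsize_estimator_least_squares (k : ℕ) (hk : 1 ≤ k) (a : ℝ) (ha : 0 < a)
    (D : ℕ → ℝ) (hD : 0 < ∑ i ∈ Finset.Icc 1 k, (i : ℝ) * D i) :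
    (-1 : ℝ) < a * (∑ i ∈ Finset.Icc 1 k, (i : ℝ) ^ 2) /
        (∑ i ∈ Finset.Icc 1 k, (i : ℝ) * D i) - 1 ∧
    ∀ N : ℝ, -1 < N →
      ((∑ i ∈ Finset.Icc 1 k,
          (D i - a * (i : ℝ) /
              ((a * (∑ i ∈ Finset.Icc 1 k, (i : ℝ) ^ 2) /
                  (∑ i ∈ Finset.Icc 1 k, (i : ℝ) * D i) - 1) + 1)) ^ 2)
        ≤ ∑ i ∈ Finset.Icc 1 k, (D i - a * (i : ℝ) / (N + 1)) ^ 2 ∧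
      ((∑ i ∈ Finset.Icc 1 k, (D i - a * (i : ℝ) / (N + 1)) ^ 2 =
          ∑ i ∈ Finset.Icc 1 k,
            (D i - a * (i : ℝ) /
                ((a * (∑ i ∈ Finset.Icc 1 k, (i : ℝ) ^ 2) /
                    (∑ i ∈ Finset.Icc 1 k, (i : ℝ) * D i) - 1) + 1)) ^ 2) →
        N = a * (∑ i ∈ Finset.Icc 1 k, (i : ℝ) ^ 2) /
            (∑ i ∈ Finset.Icc 1 k, (i : ℝ) * D i) - 1)) := by
  set S2 : ℝ := ∑ i ∈ Finset.Icc 1 k, (i : ℝ) ^ 2 with hS2def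
  set S1 : ℝ := ∑ i ∈ Finset.Icc 1 k, (i : ℝ) * D i with hS1def
  have hS2 : 0 < S2 := by
    apply Finset.sum_pos
    · intro i hi
      have : 1 ≤ i := (Finset.mem_Icc.mp hi).1
      positivity
    · exact ⟨1, Finset.mem_Icc.mpr ⟨le_refl 1, hk⟩⟩
  have hc : 0 < a * S2 / S1 := by positivity
  have hane : a ≠ 0 := ne_of_gt ha
  have hS2ne : S2 ≠ 0 := ne_of_gt hS2
  have hS1ne : S1 ≠ 0 := ne_of_gt hD
  -- expansion lemma
  have expand : ∀ x : ℝ, (∑ i ∈ Finset.Icc 1 k, (D i - a * (i : ℝ) / x) ^ 2)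
      = (∑ i ∈ Finset.Icc 1 k, (D i) ^ 2) - 2 * a * x⁻¹ * S1 + a ^ 2 * (x⁻¹) ^ 2 * S2 := by
    intro x
    have : ∀ i ∈ Finset.Icc 1 k, (D i - a * (i : ℝ) / x) ^ 2
        = (D i) ^ 2 - 2 * a * x⁻¹ * ((i : ℝ) * D i) + a ^ 2 * (x⁻¹) ^ 2 * (i : ℝ) ^ 2 := by
      intro i _; field_simp; ring
    rw [Finset.sum_congr rfl this]
    rw [Finset.sum_add_distrib, Finset.sum_sub_distrib, ← Finset.mul_sum, ← Finset.mul_sum]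
  have hv : (a * S2 / S1)⁻¹ = S1 / (a * S2) := by
    rw [inv_div]
  have hNhat : (a * S2 / S1 - 1) + 1 = a * S2 / S1 := by ring
  refine ⟨by linarith, fun N hN => ?_⟩
  have hN1 : (0:ℝ) < N + 1 := by linarith
  set u : ℝ := (N + 1)⁻¹ with hu
  set v : ℝ := (a * S2 / S1)⁻¹ with hvdef
  have key : (∑ i ∈ Finset.Icc 1 k, (D i - a * (i : ℝ) / (N + 1)) ^ 2)
      - (∑ i ∈ Finset.Icc 1 k, (D i - a * (i : ℝ) / ((a * S2 / S1 - 1) + 1)) ^ 2)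
      = a ^ 2 * S2 * (u - v) ^ 2 := by
    rw [hNhat, expand, expand, ← hu, ← hvdef, hv]
    field_simp
    ring
  constructor
  · have hpos : 0 ≤ a ^ 2 * S2 * (u - v) ^ 2 := by positivity
    linarith [key]
  · intro heq
    have huv : u = v := by
      have h0 : a ^ 2 * S2 * (u - v) ^ 2 = 0 := by rw [← key, heq, sub_self]
      have : (u - v) ^ 2 = 0 := by
        rcases mul_eq_zero.mp h0 with h | h
        · exact absurd h (by positivity)
        · exact h
      have := (pow_eq_zero_iff two_ne_zero).mp this
      linarith
    have : N + 1 = a * S2 / S1 := by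
      have := congrArg (·⁻¹) huv
      simpa [hu, hvdef, inv_inv] using this
    linarith
end
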